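/- arXiv:2502.09489 — 5 statements merged into one kernel-verified Lean document; each statement's English description precedes it below -/
import Mathlib

section
/- For every n ≥ 1, Σ_{k=1}^{n} (σ(k)/k)^2 = n · Σ_{1 ≤ d₁,d₂ ≤ n} (1/(d₁ d₂)) · (1/lcm(d₁,d₂)) + O(log² n). -/
/-!
Expanding `σ(k)/k = ∑_{d ∣ k} 1/d` and squaring, the pair `(d₁, d₂)` is counted once for each
`k ≤ n` divisible by `lcm(d₁, d₂)`, that is `⌊n / lcm(d₁, d₂)⌋` times. Replacing this floor by
`n / lcm(d₁, d₂)` costs less than `1/(d₁d₂)` per pair, hence at most `H_n² = O(log² n)` in total.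
-/

open Finset

theorem sigma_one_div_self_eq_sum_inv {K : Type*} [Field K] [CharZero K] (k : ℕ) :
    (ArithmeticFunction.sigma 1 k : K) / k = ∑ d ∈ k.divisors, (d : K)⁻¹ := by
  rw [ArithmeticFunction.sigma_one_apply, ← Nat.sum_div_divisors, Nat.cast_sum, sum_div]
  refine sum_congr rfl fun d hd => ?_
  obtain ⟨hdk, hk⟩ := Nat.mem_divisors.mp hd
  have hd0 : (d : K) ≠ 0 := Nat.cast_ne_zero.mpr (ne_zero_of_dvd_ne_zero hk hdk)
  rw [Nat.cast_div hdk hd0]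
  field_simp

theorem sum_Icc_sq_sum_divisors {R : Type*} [CommSemiring R] (f : ℕ → R) (n : ℕ) :
    ∑ k ∈ Icc 1 n, (∑ d ∈ k.divisors, f d) ^ 2
      = ∑ d₁ ∈ Icc 1 n, ∑ d₂ ∈ Icc 1 n, ((n / Nat.lcm d₁ d₂ : ℕ) : R) * (f d₁ * f d₂) := by
  have hswap : ∀ k (d : ℕ × ℕ), k ∈ Icc 1 n ∧ d ∈ k.divisors ×ˢ k.divisors ↔
      k ∈ {k ∈ Icc 1 n | Nat.lcm d.1 d.2 ∣ k} ∧ d ∈ Icc 1 n ×ˢ Icc 1 n := by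
    rintro k ⟨d₁, d₂⟩
    simp only [mem_Icc, mem_product, Nat.mem_divisors, mem_filter, Nat.lcm_dvd_iff]
    constructor
    · rintro ⟨hk, ⟨h₁, -⟩, h₂, -⟩
      exact ⟨⟨hk, h₁, h₂⟩, ⟨Nat.pos_of_dvd_of_pos h₁ hk.1, (Nat.le_of_dvd hk.1 h₁).trans hk.2⟩,
        Nat.pos_of_dvd_of_pos h₂ hk.1, (Nat.le_of_dvd hk.1 h₂).trans hk.2⟩
    · rintro ⟨⟨hk, h₁, h₂⟩, -⟩
      exact ⟨hk, ⟨h₁, by omega⟩, h₂, by omega⟩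
  have hcount : ∀ L, #{k ∈ Icc 1 n | L ∣ k} = n / L := fun L => by
    rw [← Nat.Ioc_filter_dvd_card_eq_div, ← Icc_add_one_left_eq_Ioc, zero_add]
  simp_rw [sq, sum_mul_sum, ← sum_product', sum_comm' hswap, sum_const, hcount, nsmul_eq_mul]

theorem abs_natCast_div_sub_div_lt_one {K : Type*} [Field K] [LinearOrder K]
    [IsStrictOrderedRing K] [FloorSemiring K] (m n : ℕ) :
    |((m / n : ℕ) : K) - (m : K) / n| < 1 := by
  rw [← Nat.floor_div_eq_div (K := K), abs_sub_lt_iff]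
  have hfloor_le := Nat.floor_le (a := (m : K) / n) (by positivity)
  have hlt_floor := Nat.lt_floor_add_one ((m : K) / n)
  constructor <;> linarith

theorem harmonic_le_three_mul_log {n : ℕ} (hn : 2 ≤ n) : (harmonic n : ℝ) ≤ 3 * Real.log n := by
  have hlog : 1 / 2 ≤ Real.log n :=
    calc (1 / 2 : ℝ) ≤ Real.log 2 := by linarith [Real.log_two_gt_d9]
      _ ≤ Real.log n := Real.log_le_log two_pos (by exact_mod_cast hn)
  linarith [harmonic_le_one_add_log n]

theorem abs_sum_sq_sigma_div_sub_le_harmonic_sq (n : ℕ) :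
    |∑ k ∈ Icc 1 n, ((ArithmeticFunction.sigma 1 k : ℝ) / k) ^ 2
      - n * ∑ d₁ ∈ Icc 1 n, ∑ d₂ ∈ Icc 1 n, (1 / ((d₁ : ℝ) * d₂)) * (1 / (Nat.lcm d₁ d₂ : ℝ))|
      ≤ (harmonic n : ℝ) ^ 2 := by
  have herror : ∀ d₁ d₂ : ℕ,
      |((n / Nat.lcm d₁ d₂ : ℕ) : ℝ) * ((d₁ : ℝ)⁻¹ * (d₂ : ℝ)⁻¹)
        - n * (1 / ((d₁ : ℝ) * d₂) * (1 / (Nat.lcm d₁ d₂ : ℝ)))| ≤ (d₁ : ℝ)⁻¹ * (d₂ : ℝ)⁻¹ := by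
    intro d₁ d₂
    have hc : (0 : ℝ) ≤ (d₁ : ℝ)⁻¹ * (d₂ : ℝ)⁻¹ := by positivity
    calc _ = |(((n / Nat.lcm d₁ d₂ : ℕ) : ℝ) - n / Nat.lcm d₁ d₂) * ((d₁ : ℝ)⁻¹ * (d₂ : ℝ)⁻¹)| := by
          congr 1
          ring
      _ ≤ (d₁ : ℝ)⁻¹ * (d₂ : ℝ)⁻¹ := by
          rw [abs_mul, abs_of_nonneg hc]
          exact mul_le_of_le_one_left hc (abs_natCast_div_sub_div_lt_one n _).le
  simp_rw [sigma_one_div_self_eq_sum_inv, sum_Icc_sq_sum_divisors, mul_sum, ← sum_sub_distrib]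
  calc _ ≤ ∑ d₁ ∈ Icc 1 n, ∑ d₂ ∈ Icc 1 n, (d₁ : ℝ)⁻¹ * (d₂ : ℝ)⁻¹ :=
        (abs_sum_le_sum_abs _ _).trans <| sum_le_sum fun d₁ _ =>
          (abs_sum_le_sum_abs _ _).trans <| sum_le_sum fun d₂ _ => herror d₁ d₂
    _ = (harmonic n : ℝ) ^ 2 := by
        rw [harmonic_eq_sum_Icc]
        push_cast
        rw [sq, sum_mul_sum]

/-- `∑_{k=1}^{n} (σ(k)/k)² = n · ∑_{1 ≤ d₁,d₂ ≤ n} (1/(d₁d₂)) · (1/lcm(d₁,d₂)) + O(log² n)`. -/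
theorem sum_sigma_div_sq_asymp : ∃ C : ℝ, 0 < C ∧ ∀ n : ℕ, 1 ≤ n →
    |∑ k ∈ Finset.Icc 1 n, ((ArithmeticFunction.sigma 1 k : ℝ) / k) ^ 2
      - n * ∑ d1 ∈ Finset.Icc 1 n, ∑ d2 ∈ Finset.Icc 1 n,
          (1 / ((d1 : ℝ) * d2)) * (1 / (Nat.lcm d1 d2 : ℝ))|
      ≤ C * (Real.log n) ^ 2 := by
  refine ⟨9, by norm_num, fun n hn => ?_⟩
  obtain rfl | hn := hn.eq_or_lt
  · -- `log 1 = 0`, so here the error term must vanish exactly.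
    simp [ArithmeticFunction.sigma_one_apply]
  calc _ ≤ (harmonic n : ℝ) ^ 2 := abs_sum_sq_sigma_div_sub_le_harmonic_sq n
    _ ≤ (3 * Real.log n) ^ 2 := by
        gcongr
        · exact_mod_cast (harmonic_pos (by omega)).le
        · exact harmonic_le_three_mul_log hn
    _ = 9 * Real.log n ^ 2 := by ring
end

section
/- For any positive integers i and n, Σ_{k=1}^{n} σ_0(gcd(i,k))·σ(k)/k = Σ_{d | i} Σ_{k=1}^{⌊n/d⌋} σ(kd)/(kd). -/
/-! σ₀(gcd(i, k)) counts the divisors d of i that divide k. Exchanging the two sums and writing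
the multiples of d in [1, n] as k = m * d with 1 ≤ m ≤ n / d gives the right-hand side. -/

open Finset ArithmeticFunction
open scoped ArithmeticFunction.sigma

namespace Nat

lemma divisors_gcd_eq_filter_dvd {i : ℕ} (hi : i ≠ 0) (k : ℕ) :
    (gcd i k).divisors = {d ∈ i.divisors | d ∣ k} := by
  rw [← divisors_filter_dvd_of_dvd hi (gcd_dvd_left i k)]
  exact filter_congr fun d hd => by rw [dvd_gcd_iff, and_iff_right (dvd_of_mem_divisors hd)]

lemma sum_Icc_filter_dvd {M : Type*} [AddCommMonoid M] (f : ℕ → M) (n : ℕ) {d : ℕ} (hd : 0 < d) :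
    ∑ k ∈ Icc 1 n with d ∣ k, f k = ∑ m ∈ Icc 1 (n / d), f (m * d) := by
  have hmultiples : {k ∈ Icc 1 n | d ∣ k} = (Icc 1 (n / d)).image (· * d) := by
    ext k
    simp only [mem_filter, mem_Icc, mem_image]
    constructor
    · rintro ⟨⟨hk1, hkn⟩, m, rfl⟩
      exact ⟨m, ⟨pos_of_ne_zero (right_ne_zero_of_mul (show d * m ≠ 0 by omega)),
        (le_div_iff_mul_le hd).2 (by rwa [mul_comm])⟩, mul_comm m d⟩
    · rintro ⟨m, ⟨hm1, hmn⟩, rfl⟩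
      exact ⟨⟨one_le_iff_ne_zero.2 (mul_ne_zero (by omega) hd.ne'), (le_div_iff_mul_le hd).1 hmn⟩,
        dvd_mul_left d m⟩
  rw [hmultiples, sum_image fun a _ b _ h => Nat.eq_of_mul_eq_mul_right hd h]

lemma sum_sigma_zero_gcd_mul {R : Type*} [NonAssocSemiring R] (f : ℕ → R) {i : ℕ} (hi : i ≠ 0)
    (n : ℕ) :
    ∑ k ∈ Icc 1 n, (σ 0 (gcd i k) : R) * f k = ∑ d ∈ i.divisors, ∑ m ∈ Icc 1 (n / d), f (m * d) :=
  calc ∑ k ∈ Icc 1 n, (σ 0 (gcd i k) : R) * f k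
      = ∑ k ∈ Icc 1 n, ∑ d ∈ i.divisors with d ∣ k, f k := by
        simp only [sigma_zero_apply, divisors_gcd_eq_filter_dvd hi, sum_const, nsmul_eq_mul]
    _ = ∑ d ∈ i.divisors, ∑ k ∈ Icc 1 n with d ∣ k, f k := by
        simp only [sum_filter]; exact sum_comm
    _ = ∑ d ∈ i.divisors, ∑ m ∈ Icc 1 (n / d), f (m * d) :=
        sum_congr rfl fun d hd => sum_Icc_filter_dvd f n (pos_of_mem_divisors hd)

end Nat

theorem sum_sigma0_gcd_eq_general (i n : ℕ) (hi : 0 < i) :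
    ∑ k ∈ Finset.Icc 1 n, (ArithmeticFunction.sigma 0 (Nat.gcd i k) : ℝ) * (ArithmeticFunction.sigma 1 k : ℝ) / k =
    ∑ d ∈ i.divisors, ∑ k ∈ Finset.Icc 1 (n / d), (ArithmeticFunction.sigma 1 (k * d) : ℝ) / (k * d) := by
  simp only [mul_div_assoc]
  exact_mod_cast Nat.sum_sigma_zero_gcd_mul (fun k => (σ 1 k : ℝ) / k) hi.ne' n

/-- `∑_{k=1}^{n} σ₀(gcd(i,k))·σ(k)/k = ∑_{d ∣ i} ∑_{k=1}^{⌊n/d⌋} σ(kd)/(kd)`. -/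
theorem sum_sigma0_gcd_eq (i n : ℕ) (hi : 0 < i) (hn : 0 < n) :
    ∑ k ∈ Finset.Icc 1 n, (ArithmeticFunction.sigma 0 (Nat.gcd i k) : ℝ) * (ArithmeticFunction.sigma 1 k : ℝ) / k =
    ∑ d ∈ i.divisors, ∑ k ∈ Finset.Icc 1 (n / d), (ArithmeticFunction.sigma 1 (k * d) : ℝ) / (k * d) :=
  sum_sigma0_gcd_eq_general i n hi
end

section
/- For all positive integers ℓ and n, Σ_{k=1}^{n} σ(ℓk)/(ℓk) = n · Σ_{d=1}^{∞} gcd(d,ℓ)/d² + O(log(ℓn)), where the implied constant is absolute. -/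
/-!
Writing `σ(m)/m = ∑_{d ∣ m} 1/d` and exchanging the order of summation,
`∑_{k ≤ n} σ(ℓk)/(ℓk) = ∑_{d ≤ ℓn} ⌊n / (d / (d,ℓ))⌋ / d`, because `d ∣ ℓk` exactly when
`d / (d,ℓ) ∣ k`. Replacing each floor by `n (d,ℓ) / d` costs at most `1/d`, hence at most
`1 + log(ℓn)` in total, and the terms `d > ℓn` of `n ∑ (d,ℓ)/d²` contribute at most
`n · ℓ/(ℓn) = 1`.
-/

open Finset

lemma abs_natCast_div_sub_div_le_one (n m : ℕ) : |((n / m : ℕ) : ℝ) - n / m| ≤ 1 := by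
  rw [← Nat.floor_div_eq_div (K := ℝ), abs_sub_comm,
    abs_of_nonneg (sub_nonneg.2 (Nat.floor_le (by positivity)))]
  linarith [Nat.lt_floor_add_one ((n : ℝ) / m)]

lemma Nat.dvd_mul_iff_div_gcd_dvd {d : ℕ} (hd : 0 < d) (l k : ℕ) :
    d ∣ l * k ↔ d / d.gcd l ∣ k := by
  rw [Nat.div_dvd_iff_dvd_mul (Nat.gcd_dvd_left d l) (Nat.gcd_pos_of_pos_left l hd),
    Nat.dvd_gcd_mul_iff_dvd_mul]

lemma card_filter_dvd_mul_Icc {d : ℕ} (hd : 0 < d) (l n : ℕ) :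
    #{k ∈ Icc 1 n | d ∣ l * k} = n / (d / d.gcd l) := by
  rw [← zero_add 1, Icc_add_one_left_eq_Ioc, ← Nat.Ioc_filter_dvd_card_eq_div]
  simp only [Nat.dvd_mul_iff_div_gcd_dvd hd]

lemma Nat.divisors_eq_filter_dvd_Icc {m M : ℕ} (hm : m ≠ 0) (hmM : m ≤ M) :
    m.divisors = {d ∈ Icc 1 M | d ∣ m} := by
  ext d
  simp only [Nat.mem_divisors, mem_filter, mem_Icc]
  constructor
  · rintro ⟨hdm, -⟩
    exact ⟨⟨Nat.pos_of_dvd_of_pos hdm (Nat.pos_of_ne_zero hm),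
      (Nat.le_of_dvd (Nat.pos_of_ne_zero hm) hdm).trans hmM⟩, hdm⟩
  · rintro ⟨-, hdm⟩
    exact ⟨hdm, hm⟩

lemma sigma_one_div_eq_sum_inv (m : ℕ) :
    (ArithmeticFunction.sigma 1 m : ℝ) / m = ∑ d ∈ m.divisors, (d : ℝ)⁻¹ := by
  obtain rfl | hm := eq_or_ne m 0
  · simp
  rw [ArithmeticFunction.sigma_one_apply, ← Nat.sum_div_divisors, Nat.cast_sum, sum_div]
  refine sum_congr rfl fun d hd => ?_
  have hd0 : (d : ℝ) ≠ 0 := Nat.cast_ne_zero.2 (Nat.pos_of_mem_divisors hd).ne'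
  rw [Nat.cast_div (Nat.dvd_of_mem_divisors hd) hd0, div_right_comm,
    div_self (Nat.cast_ne_zero.2 hm), one_div]

lemma sum_sigma_one_div_mul_eq {l : ℕ} (hl : l ≠ 0) (n : ℕ) :
    ∑ k ∈ Icc 1 n, (ArithmeticFunction.sigma 1 (l * k) : ℝ) / (l * k)
      = ∑ d ∈ Icc 1 (l * n), ((n / (d / d.gcd l) : ℕ) : ℝ) / d := by
  have hdivisors : ∀ k ∈ Icc 1 n,
      (ArithmeticFunction.sigma 1 (l * k) : ℝ) / (l * k)
        = ∑ d ∈ Icc 1 (l * n), if d ∣ l * k then (d : ℝ)⁻¹ else 0 := by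
    intro k hk
    obtain ⟨hk1, hkn⟩ := mem_Icc.1 hk
    rw [← sum_filter, ← Nat.divisors_eq_filter_dvd_Icc (by positivity)
      (Nat.mul_le_mul_left l hkn), ← sigma_one_div_eq_sum_inv, Nat.cast_mul]
  rw [sum_congr rfl hdivisors, sum_comm]
  refine sum_congr rfl fun d hd => ?_
  rw [← sum_filter, sum_const, card_filter_dvd_mul_Icc (mem_Icc.1 hd).1, nsmul_eq_mul,
    div_eq_mul_inv]

lemma abs_natCast_div_div_gcd_div_sub_le (n d l : ℕ) :
    |((n / (d / d.gcd l) : ℕ) : ℝ) / d - n * ((d.gcd l : ℝ) / d ^ 2)| ≤ (d : ℝ)⁻¹ := by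
  obtain rfl | hd := Nat.eq_zero_or_pos d
  · simp
  have hgcd : (d.gcd l : ℝ) * ((d / d.gcd l : ℕ) : ℝ) = d := by
    exact_mod_cast Nat.mul_div_cancel' (Nat.gcd_dvd_left d l)
  have hg : (d.gcd l : ℝ) ≠ 0 := by positivity
  have hexact : (n : ℝ) * ((d.gcd l : ℝ) / d ^ 2) = (n : ℝ) / ((d / d.gcd l : ℕ) : ℝ) / d := by
    rw [← hgcd]
    field_simp
  rw [hexact, ← sub_div, abs_div, Nat.abs_cast, div_eq_mul_inv]
  exact mul_le_of_le_one_left (by positivity) (abs_natCast_div_sub_div_le_one _ _)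

lemma summable_gcd_div_sq {l : ℕ} (hl : l ≠ 0) :
    Summable fun d : ℕ => (d.gcd l : ℝ) / d ^ 2 := by
  refine Summable.of_nonneg_of_le (fun d => by positivity) (fun d => ?_)
    ((Real.summable_one_div_nat_pow.2 one_lt_two).mul_left (l : ℝ))
  rw [mul_one_div]
  gcongr
  exact_mod_cast Nat.gcd_le_right _ (Nat.pos_of_ne_zero hl)
lemma sum_range_inv_sq_add_le {x : ℝ} (hx : 0 < x) (M : ℕ) :
    ∑ i ∈ range M, ((x + i + 1) ^ 2)⁻¹ ≤ x⁻¹ := by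
  have htelescope : ∀ y : ℝ, 0 < y → ((y + 1) ^ 2)⁻¹ ≤ y⁻¹ - (y + 1)⁻¹ := by
    intro y hy
    rw [inv_sub_inv hy.ne' (by positivity), add_sub_cancel_left, one_div]
    gcongr
    nlinarith
  calc ∑ i ∈ range M, ((x + i + 1) ^ 2)⁻¹
      ≤ ∑ i ∈ range M, ((x + i)⁻¹ - (x + (i + 1 : ℕ))⁻¹) :=
        sum_le_sum fun i _ => by push_cast; rw [← add_assoc]; exact htelescope _ (by positivity)
    _ = x⁻¹ - (x + M)⁻¹ := by rw [sum_range_sub' fun i : ℕ => (x + i)⁻¹, Nat.cast_zero, add_zero]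
    _ ≤ x⁻¹ := sub_le_self _ (by positivity)

lemma tsum_gcd_div_sq_tail_le {l N : ℕ} (hl : l ≠ 0) (hN : 0 < N) :
    ∑' i : ℕ, ((i + N + 1).gcd l : ℝ) / ((i + N + 1 : ℕ) : ℝ) ^ 2 ≤ l / N := by
  refine Real.tsum_le_of_sum_range_le (fun i => by positivity) fun M => ?_
  calc ∑ i ∈ range M, ((i + N + 1).gcd l : ℝ) / ((i + N + 1 : ℕ) : ℝ) ^ 2
      ≤ ∑ i ∈ range M, (l : ℝ) * (((N : ℝ) + i + 1) ^ 2)⁻¹ := by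
        refine sum_le_sum fun i _ => ?_
        rw [← div_eq_mul_inv]
        push_cast
        rw [add_comm (i : ℝ)]
        gcongr
        exact_mod_cast Nat.gcd_le_right _ (Nat.pos_of_ne_zero hl)
    _ ≤ (l : ℝ) * (N : ℝ)⁻¹ := by
        rw [← mul_sum]
        gcongr
        exact sum_range_inv_sq_add_le (by positivity) M
    _ = l / N := (div_eq_mul_inv _ _).symm

lemma tsum_gcd_succ_div_sq_eq {l : ℕ} (hl : l ≠ 0) (N : ℕ) :
    ∑' d : ℕ, ((d + 1).gcd l : ℝ) / ((d + 1 : ℕ) : ℝ) ^ 2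
      = ∑ d ∈ Icc 1 N, (d.gcd l : ℝ) / (d : ℝ) ^ 2
        + ∑' i : ℕ, ((i + N + 1).gcd l : ℝ) / ((i + N + 1 : ℕ) : ℝ) ^ 2 := by
  rw [← ((summable_nat_add_iff 1).2 (summable_gcd_div_sq hl)).sum_add_tsum_nat_add N,
    range_eq_Ico, sum_Ico_add' (fun d : ℕ => (d.gcd l : ℝ) / (d : ℝ) ^ 2), zero_add,
    Ico_add_one_right_eq_Icc]

lemma sum_Icc_inv_le_one_add_log (N : ℕ) : ∑ d ∈ Icc 1 N, (d : ℝ)⁻¹ ≤ 1 + Real.log N := by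
  simpa only [harmonic_eq_sum_Icc, Rat.cast_sum, Rat.cast_inv, Rat.cast_natCast]
    using harmonic_le_one_add_log N

/-- `∑_{k=1}^{n} σ(ℓk)/(ℓk) = n · ∑_{d=1}^{∞} gcd(d,ℓ)/d² + O(log(ℓn))` with an
absolute implied constant. -/
theorem sum_sigma_div_mul : ∃ C : ℝ, 0 < C ∧ ∀ l n : ℕ, 1 ≤ l → 1 ≤ n →
    |∑ k ∈ Finset.Icc 1 n, (ArithmeticFunction.sigma 1 (l * k) : ℝ) / (l * k)
      - n * ∑' d : ℕ, (Nat.gcd (d + 1) l : ℝ) / ((d + 1 : ℕ) ^ 2)|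
      ≤ C * (1 + Real.log (l * n)) := by
  refine ⟨2, two_pos, fun l n hl hn => ?_⟩
  have hl0 : l ≠ 0 := by omega
  have hN : 0 < l * n := by positivity
  have hntail : (n : ℝ) * ∑' i : ℕ, ((i + l * n + 1).gcd l : ℝ) / ((i + l * n + 1 : ℕ) : ℝ) ^ 2
      ≤ 1 :=
    calc _ ≤ (n : ℝ) * (l / (l * n : ℕ)) :=
          mul_le_mul_of_nonneg_left (tsum_gcd_div_sq_tail_le hl0 hN) n.cast_nonneg
      _ = 1 := by push_cast; field_simp
  have hharmonic := sum_Icc_inv_le_one_add_log (l * n)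
  rw [sum_sigma_one_div_mul_eq hl0, tsum_gcd_succ_div_sq_eq hl0 (l * n), mul_add, mul_sum,
    ← sub_sub, ← sum_sub_distrib]
  calc _ ≤ ∑ d ∈ Icc 1 (l * n), (d : ℝ)⁻¹ + 1 := by
        refine (abs_sub _ _).trans (add_le_add ?_ ?_)
        · exact (abs_sum_le_sum_abs _ _).trans
            (sum_le_sum fun d _ => abs_natCast_div_div_gcd_div_sub_le n d l)
        · rwa [abs_of_nonneg (by positivity)]
    _ ≤ 2 * (1 + Real.log (l * n)) := by
        have hlog : 0 ≤ Real.log (l * n) := Real.log_nonneg (by exact_mod_cast hN)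
        push_cast at hharmonic
        linarith
end

section
/- For every positive integer ℓ, Σ_{d=1}^{∞} gcd(d,ℓ)/d² = (ζ(2)/ℓ²) · Σ_{d | ℓ} d² · φ(ℓ/d), where φ is Euler's totient function. -/
/-!
Gauss's identity `gcd n l = ∑_{e ∣ gcd n l} φ e` splits the series into
`∑_{e ∣ l} φ e ∑_{e ∣ n} 1 / n² = ζ(2) ∑_{e ∣ l} φ e / e²`, and the involution `e ↦ l / e` of the
divisors of `l` turns the last sum into `l⁻² ∑_{d ∣ l} d² φ(l / d)`.
-/

open Finset Real

namespace Nat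

theorem sum_totient_filter_dvd_divisors {l : ℕ} (hl : l ≠ 0) (n : ℕ) :
    ∑ e ∈ l.divisors with e ∣ n, φ e = gcd n l := by
  rw [← sum_totient (gcd n l), ← divisors_filter_dvd_of_dvd hl (gcd_dvd_right n l)]
  refine sum_congr (filter_congr fun e he => ?_) fun _ _ => rfl
  simp [dvd_gcd_iff, dvd_of_mem_divisors he]

theorem sum_totient_div_sq_divisors {l : ℕ} (hl : l ≠ 0) :
    ∑ e ∈ l.divisors, (φ e : ℝ) / e ^ 2 = (∑ d ∈ l.divisors, (d : ℝ) ^ 2 * φ (l / d)) / l ^ 2 := by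
  rw [← sum_div_divisors, sum_div]
  refine sum_congr rfl fun e he => ?_
  have he0 : (e : ℝ) ≠ 0 := cast_ne_zero.mpr (pos_of_mem_divisors he).ne'
  rw [cast_div (dvd_of_mem_divisors he) he0]
  field_simp

end Nat

theorem hasSum_ite_dvd_iff {α : Type*} [AddCommMonoid α] [TopologicalSpace α] {e : ℕ} (he : e ≠ 0)
    {f : ℕ → α} {a : α} :
    HasSum (fun n => if e ∣ n then f n else 0) a ↔ HasSum (fun k => f (e * k)) a := by
  rw [← (mul_right_injective₀ he).hasSum_iff]
  · simp [Function.comp_def]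
  · rintro n hn
    simp only [Set.mem_range, not_exists] at hn
    exact if_neg fun ⟨k, hk⟩ => hn k hk.symm

theorem hasSum_ite_dvd_one_div_sq {e : ℕ} (he : e ≠ 0) :
    HasSum (fun n : ℕ => if e ∣ n then 1 / (n : ℝ) ^ 2 else 0) (π ^ 2 / 6 / e ^ 2) := by
  rw [hasSum_ite_dvd_iff he]
  refine (hasSum_zeta_two.div_const ((e : ℝ) ^ 2)).congr_fun fun k => ?_
  push_cast
  ring

theorem hasSum_gcd_div_sq {l : ℕ} (hl : l ≠ 0) :
    HasSum (fun n : ℕ => (Nat.gcd n l : ℝ) / n ^ 2)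
      (π ^ 2 / 6 * ∑ e ∈ l.divisors, (Nat.totient e : ℝ) / e ^ 2) := by
  have hgcd (n : ℕ) : (Nat.gcd n l : ℝ) / n ^ 2 =
      ∑ e ∈ l.divisors, (Nat.totient e : ℝ) * (if e ∣ n then 1 / (n : ℝ) ^ 2 else 0) := by
    rw [← Nat.sum_totient_filter_dvd_divisors hl n, Nat.cast_sum, sum_div, sum_filter]
    refine sum_congr rfl fun e _ => ?_
    split_ifs <;> ring
  have hseries := hasSum_sum fun e (he : e ∈ l.divisors) =>
    (hasSum_ite_dvd_one_div_sq (Nat.pos_of_mem_divisors he).ne').mul_left (Nat.totient e : ℝ)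
  rw [mul_sum, sum_congr rfl fun e _ => mul_div_left_comm _ _ _]
  exact hseries.congr_fun hgcd

/-- `∑_{d=1}^{∞} gcd(d,ℓ)/d² = (ζ(2)/ℓ²) · ∑_{d ∣ ℓ} d²·φ(ℓ/d)`, where `ζ(2) = π²/6`. -/
theorem cc_eq_totient_sum (l : ℕ) (hl : 0 < l) :
    (∑' d : ℕ, (Nat.gcd (d + 1) l : ℝ) / ((d + 1 : ℕ) ^ 2)) =
      (Real.pi ^ 2 / 6) / (l : ℝ) ^ 2 *
        ∑ d ∈ l.divisors, (d : ℝ) ^ 2 * (Nat.totient (l / d) : ℝ) := by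
  -- the dropped `n = 0` term is `l / 0 = 0`
  have h := (hasSum_nat_add_iff' 1).mpr (hasSum_gcd_div_sq hl.ne')
  simp only [range_one, sum_singleton, Nat.cast_zero, zero_pow two_ne_zero, div_zero, sub_zero] at h
  rw [h.tsum_eq, Nat.sum_totient_div_sq_divisors hl.ne']
  ring
end

section
/- For every positive integer d₁, Σ_{d₂=1}^{∞} c_{d₂}·gcd(d₁,d₂)/d₂² = O(1 + log d₁), where c_ℓ = Σ_{d=1}^{∞} gcd(d,ℓ)/d². -/
/-!
Write `σ₋₁(n) = ∑_{d ∣ n} 1/d` and `ζ(2) = π²/6`. Bounding `gcd(a, m)` by the sum of the common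
divisors `d` of `a` and `m` and summing over the multiples `m` of each `d` gives
`∑_m gcd(a, m)/m² ≤ ζ(2) σ₋₁(a)`, in particular `c_m ≤ ζ(2) σ₋₁(m)`. Expanding `σ₋₁(m)` and writing
`m = e k` with `gcd(n, e k) ≤ e gcd(n, k)` then gives
`∑_m σ₋₁(m) gcd(n, m)/m² ≤ ζ(2) ∑_k gcd(n, k)/k² ≤ ζ(2)² σ₋₁(n)`, and `σ₋₁(n) ≤ H_n ≤ 1 + log n`.
All sums are taken in `ℝ≥0∞`, where they may be freely interchanged.
-/

/-- `c_ℓ = ∑_{d=1}^{∞} gcd(d,ℓ)/d²`. -/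
noncomputable def cc (l : ℕ) : ℝ := ∑' d : ℕ, (Nat.gcd (d + 1) l : ℝ) / ((d + 1 : ℕ) ^ 2)

open ENNReal Real

theorem Nat.gcd_mul_le_mul_gcd (k : ℕ) {m n : ℕ} (hm : 0 < m) (hn : 0 < n) :
    Nat.gcd k (m * n) ≤ m * Nat.gcd k n := by
  refine Nat.le_of_dvd (Nat.mul_pos hm (Nat.gcd_pos_of_pos_right k hn)) ?_
  rw [← Nat.gcd_mul_left]
  exact Nat.dvd_gcd ((Nat.gcd_dvd_left _ _).trans (dvd_mul_left k m)) (Nat.gcd_dvd_right _ _)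

theorem Nat.gcd_le_sum_divisors_dvd (a b : ℕ) (hb : b ≠ 0) :
    Nat.gcd a b ≤ ∑ d ∈ b.divisors with d ∣ a, d :=
  Finset.single_le_sum (f := id) (fun _ _ => Nat.zero_le _) <| Finset.mem_filter.mpr
    ⟨Nat.mem_divisors.mpr ⟨Nat.gcd_dvd_right a b, hb⟩, Nat.gcd_dvd_left a b⟩

section TopologicalAddCommMonoid

variable {α : Type*} [AddCommMonoid α] [TopologicalSpace α]

theorem tsum_ite_dvd_succ {e : ℕ} (he : e ≠ 0) (F : ℕ → α) :
    ∑' m, (if e ∣ m + 1 then F (m + 1) else 0) = ∑' k, F (e * (k + 1)) := by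
  have hsucc (k : ℕ) : e * k + (e - 1) + 1 = e * (k + 1) := by
    rw [mul_add_one]; omega
  have hinj : Function.Injective fun k => e * k + (e - 1) := fun a b h => by
    simpa [he] using h
  rw [← hinj.tsum_eq]
  · simp only [hsucc, dvd_mul_right, if_true]
  · intro m hm
    obtain ⟨c, hc⟩ : e ∣ m + 1 := by by_contra h; simp [h] at hm
    obtain ⟨k, rfl⟩ : ∃ k, c = k + 1 := Nat.exists_eq_succ_of_ne_zero (by rintro rfl; omega)
    exact ⟨k, show e * k + (e - 1) = m by have := hsucc k; omega⟩

theorem sum_divisors_eq_tsum_ite {n : ℕ} (hn : n ≠ 0) (G : ℕ → α) :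
    ∑ d ∈ n.divisors, G d = ∑' e, if e + 1 ∣ n then G (e + 1) else 0 := by
  rw [tsum_eq_sum (s := Finset.range n), Nat.divisors, Finset.sum_filter,
    Finset.sum_Ico_eq_sum_range, Nat.add_sub_cancel]
  · simp only [add_comm 1]
  · intro e he
    rw [Finset.mem_range, not_lt] at he
    rw [if_neg fun h => by have := Nat.le_of_dvd (Nat.pos_of_ne_zero hn) h; omega]

end TopologicalAddCommMonoid

theorem ofReal_tsum_le_tsum_ofReal {ι : Type*} {f : ι → ℝ} (hf : ∀ i, 0 ≤ f i) :
    ENNReal.ofReal (∑' i, f i) ≤ ∑' i, ENNReal.ofReal (f i) := by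
  by_cases hsum : Summable f
  · exact (ENNReal.ofReal_tsum_of_nonneg hf hsum).le
  · simp [tsum_eq_zero_of_not_summable hsum]

theorem tsum_le_of_tsum_ofReal_le {ι : Type*} {f : ι → ℝ} (hf : ∀ i, 0 ≤ f i) {A : ℝ}
    (hA : 0 ≤ A) (h : ∑' i, ENNReal.ofReal (f i) ≤ ENNReal.ofReal A) : ∑' i, f i ≤ A :=
  (ENNReal.ofReal_le_ofReal_iff hA).mp ((ofReal_tsum_le_tsum_ofReal hf).trans h)

noncomputable def invDivisorSum (n : ℕ) : ℝ≥0∞ := ∑ d ∈ n.divisors, (d : ℝ≥0∞)⁻¹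

theorem invDivisorSum_le_one_add_log (n : ℕ) :
    invDivisorSum n ≤ ENNReal.ofReal (1 + Real.log n) := by
  have hdiv : n.divisors ⊆ Finset.Icc 1 n := fun d hd =>
    Finset.mem_Icc.mpr ⟨Nat.pos_of_mem_divisors hd, Nat.divisor_le hd⟩
  calc invDivisorSum n ≤ ∑ d ∈ Finset.Icc 1 n, (d : ℝ≥0∞)⁻¹ :=
        Finset.sum_le_sum_of_subset hdiv
    _ = ENNReal.ofReal (harmonic n) := by
        rw [harmonic_eq_sum_Icc, Rat.cast_sum,
          ENNReal.ofReal_sum_of_nonneg fun _ _ => by positivity]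
        refine Finset.sum_congr rfl fun d hd => ?_
        rw [Rat.cast_inv, Rat.cast_natCast, ENNReal.ofReal_inv_of_pos
          (by exact_mod_cast (Finset.mem_Icc.mp hd).1), ENNReal.ofReal_natCast]
    _ ≤ ENNReal.ofReal (1 + Real.log n) := ENNReal.ofReal_le_ofReal (harmonic_le_one_add_log n)

theorem ofReal_div_natCast_sq {x : ℝ} (hx : 0 ≤ x) {n : ℕ} (hn : n ≠ 0) :
    ENNReal.ofReal (x / n ^ 2) = ENNReal.ofReal x * (n : ℝ≥0∞)⁻¹ ^ 2 := by
  rw [div_eq_mul_inv, ENNReal.ofReal_mul hx, ← inv_pow, ENNReal.ofReal_pow (by positivity),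
    ENNReal.ofReal_inv_of_pos (by positivity), ENNReal.ofReal_natCast]

theorem tsum_inv_succ_sq : ∑' k : ℕ, ((k + 1 : ℕ) : ℝ≥0∞)⁻¹ ^ 2 = ENNReal.ofReal (π ^ 2 / 6) := by
  have hsum : HasSum (fun k : ℕ => 1 / ((k + 1 : ℕ) : ℝ) ^ 2) (π ^ 2 / 6) := by
    simpa using (hasSum_nat_add_iff' 1).mpr hasSum_zeta_two
  rw [← hsum.tsum_eq, ENNReal.ofReal_tsum_of_nonneg (fun _ => by positivity) hsum.summable]
  simp only [ofReal_div_natCast_sq zero_le_one (Nat.succ_ne_zero _), ENNReal.ofReal_one, one_mul]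

theorem natCast_mul_inv_natCast_mul_sq {e : ℕ} (he : e ≠ 0) (k : ℕ) :
    (e : ℝ≥0∞) * ((e * k : ℕ) : ℝ≥0∞)⁻¹ ^ 2 = (e : ℝ≥0∞)⁻¹ * (k : ℝ≥0∞)⁻¹ ^ 2 := by
  have he' : (e : ℝ≥0∞) ≠ 0 := by exact_mod_cast he
  rw [Nat.cast_mul, ENNReal.mul_inv (.inl he') (.inl (ENNReal.natCast_ne_top e)), mul_pow, sq,
    ← mul_assoc, ← mul_assoc, ENNReal.mul_inv_cancel he' (ENNReal.natCast_ne_top e), one_mul]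

theorem tsum_sum_divisors_succ (G : ℕ → ℕ → ℝ≥0∞) :
    ∑' m, ∑ d ∈ (m + 1).divisors, G d (m + 1) = ∑' e, ∑' k, G (e + 1) ((e + 1) * (k + 1)) := by
  simp_rw [sum_divisors_eq_tsum_ite (Nat.succ_ne_zero _)]
  rw [ENNReal.tsum_comm]
  exact tsum_congr fun e => tsum_ite_dvd_succ (Nat.succ_ne_zero e) (G (e + 1))

theorem tsum_gcd_mul_le {n : ℕ} (hn : n ≠ 0) (F : ℕ → ℝ≥0∞) :
    ∑' m, (Nat.gcd n (m + 1) : ℝ≥0∞) * F (m + 1)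
      ≤ ∑ d ∈ n.divisors, (d : ℝ≥0∞) * ∑' k, F (d * (k + 1)) := by
  calc ∑' m, (Nat.gcd n (m + 1) : ℝ≥0∞) * F (m + 1)
      ≤ ∑' m, ∑ d ∈ (m + 1).divisors, if d ∣ n then (d : ℝ≥0∞) * F (m + 1) else 0 := by
        refine ENNReal.tsum_le_tsum fun m => ?_
        rw [← Finset.sum_filter, ← Finset.sum_mul]
        gcongr
        rw [← Nat.cast_sum]
        exact Nat.cast_le.mpr (Nat.gcd_le_sum_divisors_dvd n (m + 1) (Nat.succ_ne_zero m))
    _ = ∑' e, ∑' k, if e + 1 ∣ n then ((e + 1 : ℕ) : ℝ≥0∞) * F ((e + 1) * (k + 1)) else 0 :=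
        tsum_sum_divisors_succ fun d m => if d ∣ n then (d : ℝ≥0∞) * F m else 0
    _ = ∑' e, if e + 1 ∣ n then ((e + 1 : ℕ) : ℝ≥0∞) * ∑' k, F ((e + 1) * (k + 1)) else 0 := by
        congr! 2 with e
        split_ifs
        · exact ENNReal.tsum_mul_left
        · exact tsum_zero
    _ = ∑ d ∈ n.divisors, (d : ℝ≥0∞) * ∑' k, F (d * (k + 1)) :=
        (sum_divisors_eq_tsum_ite hn fun d => (d : ℝ≥0∞) * ∑' k, F (d * (k + 1))).symm

theorem tsum_gcd_mul_inv_sq_le {n : ℕ} (hn : n ≠ 0) :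
    ∑' m, (Nat.gcd n (m + 1) : ℝ≥0∞) * ((m + 1 : ℕ) : ℝ≥0∞)⁻¹ ^ 2
      ≤ ENNReal.ofReal (π ^ 2 / 6) * invDivisorSum n := by
  refine (tsum_gcd_mul_le hn fun m => (m : ℝ≥0∞)⁻¹ ^ 2).trans_eq ?_
  rw [invDivisorSum, Finset.mul_sum]
  refine Finset.sum_congr rfl fun d hd => ?_
  rw [mul_comm (ENNReal.ofReal _), ← tsum_inv_succ_sq, ← ENNReal.tsum_mul_left,
    ← ENNReal.tsum_mul_left]
  exact tsum_congr fun k => natCast_mul_inv_natCast_mul_sq (Nat.pos_of_mem_divisors hd).ne' _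

theorem ofReal_cc_le {n : ℕ} (hn : n ≠ 0) :
    ENNReal.ofReal (cc n) ≤ ENNReal.ofReal (π ^ 2 / 6) * invDivisorSum n := by
  refine (ofReal_tsum_le_tsum_ofReal fun _ => by positivity).trans_eq ?_ |>.trans
    (tsum_gcd_mul_inv_sq_le hn)
  refine tsum_congr fun d => ?_
  rw [ofReal_div_natCast_sq (Nat.cast_nonneg _) (Nat.succ_ne_zero d), ENNReal.ofReal_natCast,
    Nat.gcd_comm]

theorem inv_mul_gcd_mul_inv_sq_le (n : ℕ) {e k : ℕ} (he : 0 < e) (hk : 0 < k) :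
    (e : ℝ≥0∞)⁻¹ * Nat.gcd n (e * k) * ((e * k : ℕ) : ℝ≥0∞)⁻¹ ^ 2
      ≤ (e : ℝ≥0∞)⁻¹ ^ 2 * (Nat.gcd n k * (k : ℝ≥0∞)⁻¹ ^ 2) := by
  calc (e : ℝ≥0∞)⁻¹ * Nat.gcd n (e * k) * ((e * k : ℕ) : ℝ≥0∞)⁻¹ ^ 2
      ≤ (e : ℝ≥0∞)⁻¹ * (e * Nat.gcd n k) * ((e * k : ℕ) : ℝ≥0∞)⁻¹ ^ 2 := by
        gcongr
        exact_mod_cast Nat.gcd_mul_le_mul_gcd n he hk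
    _ = (e : ℝ≥0∞)⁻¹ * Nat.gcd n k * ((e : ℝ≥0∞) * ((e * k : ℕ) : ℝ≥0∞)⁻¹ ^ 2) := by ring
    _ = (e : ℝ≥0∞)⁻¹ ^ 2 * (Nat.gcd n k * (k : ℝ≥0∞)⁻¹ ^ 2) := by
        rw [natCast_mul_inv_natCast_mul_sq he.ne']
        ring

theorem tsum_invDivisorSum_mul_gcd_le {n : ℕ} (hn : n ≠ 0) :
    ∑' m, invDivisorSum (m + 1) * Nat.gcd n (m + 1) * ((m + 1 : ℕ) : ℝ≥0∞)⁻¹ ^ 2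
      ≤ ENNReal.ofReal (π ^ 2 / 6) ^ 2 * invDivisorSum n := by
  calc ∑' m, invDivisorSum (m + 1) * Nat.gcd n (m + 1) * ((m + 1 : ℕ) : ℝ≥0∞)⁻¹ ^ 2
      = ∑' e, ∑' k, ((e + 1 : ℕ) : ℝ≥0∞)⁻¹ * Nat.gcd n ((e + 1) * (k + 1))
          * (((e + 1) * (k + 1) : ℕ) : ℝ≥0∞)⁻¹ ^ 2 := by
        rw [← tsum_sum_divisors_succ fun d m => (d : ℝ≥0∞)⁻¹ * Nat.gcd n m * (m : ℝ≥0∞)⁻¹ ^ 2]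
        simp only [invDivisorSum, Finset.sum_mul]
    _ ≤ ∑' e, ∑' k, ((e + 1 : ℕ) : ℝ≥0∞)⁻¹ ^ 2
          * (Nat.gcd n (k + 1) * ((k + 1 : ℕ) : ℝ≥0∞)⁻¹ ^ 2) :=
        ENNReal.tsum_le_tsum fun e => ENNReal.tsum_le_tsum fun k =>
          inv_mul_gcd_mul_inv_sq_le n e.succ_pos k.succ_pos
    _ = ENNReal.ofReal (π ^ 2 / 6) * ∑' k, Nat.gcd n (k + 1) * ((k + 1 : ℕ) : ℝ≥0∞)⁻¹ ^ 2 := by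
        simp only [ENNReal.tsum_mul_left, ENNReal.tsum_mul_right, tsum_inv_succ_sq]
    _ ≤ ENNReal.ofReal (π ^ 2 / 6) ^ 2 * invDivisorSum n := by
        rw [sq (ENNReal.ofReal _), mul_assoc]
        gcongr
        exact tsum_gcd_mul_inv_sq_le hn

theorem cc_nonneg (n : ℕ) : 0 ≤ cc n := tsum_nonneg fun _ => by positivity

theorem tsum_ofReal_cc_mul_gcd_le {n : ℕ} (hn : n ≠ 0) :
    ∑' m, ENNReal.ofReal (cc (m + 1)) * Nat.gcd n (m + 1) * ((m + 1 : ℕ) : ℝ≥0∞)⁻¹ ^ 2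
      ≤ ENNReal.ofReal (π ^ 2 / 6) ^ 3 * invDivisorSum n := by
  calc ∑' m, ENNReal.ofReal (cc (m + 1)) * Nat.gcd n (m + 1) * ((m + 1 : ℕ) : ℝ≥0∞)⁻¹ ^ 2
      ≤ ∑' m, ENNReal.ofReal (π ^ 2 / 6)
          * (invDivisorSum (m + 1) * Nat.gcd n (m + 1) * ((m + 1 : ℕ) : ℝ≥0∞)⁻¹ ^ 2) := by
        refine ENNReal.tsum_le_tsum fun m => ?_
        simp only [← mul_assoc]
        gcongr
        exact ofReal_cc_le m.succ_ne_zero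
    _ ≤ ENNReal.ofReal (π ^ 2 / 6) * (ENNReal.ofReal (π ^ 2 / 6) ^ 2 * invDivisorSum n) := by
        rw [ENNReal.tsum_mul_left]
        gcongr
        exact tsum_invDivisorSum_mul_gcd_le hn
    _ = ENNReal.ofReal (π ^ 2 / 6) ^ 3 * invDivisorSum n := by ring

/-- `∑_{d₂=1}^{∞} c_{d₂}·gcd(d₁,d₂)/d₂² = O(1 + log d₁)` uniformly in `d₁`. -/
theorem sum_cc_gcd_le : ∃ C : ℝ, 0 < C ∧ ∀ d1 : ℕ, 1 ≤ d1 →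
    (∑' d2 : ℕ, cc (d2 + 1) * (Nat.gcd d1 (d2 + 1) : ℝ) / ((d2 + 1 : ℕ) ^ 2))
      ≤ C * (1 + Real.log d1) := by
  refine ⟨(π ^ 2 / 6) ^ 3, by positivity, fun d1 hd1 => ?_⟩
  have hlog : 0 ≤ 1 + Real.log d1 := add_nonneg zero_le_one (Real.log_natCast_nonneg d1)
  have hnum (m : ℕ) : 0 ≤ cc (m + 1) * Nat.gcd d1 (m + 1) :=
    mul_nonneg (cc_nonneg _) (Nat.cast_nonneg _)
  refine tsum_le_of_tsum_ofReal_le (fun m => div_nonneg (hnum m) (sq_nonneg _)) (by positivity) ?_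
  calc ∑' m, ENNReal.ofReal (cc (m + 1) * Nat.gcd d1 (m + 1) / ((m + 1 : ℕ) : ℝ) ^ 2)
      = ∑' m, ENNReal.ofReal (cc (m + 1)) * Nat.gcd d1 (m + 1) * ((m + 1 : ℕ) : ℝ≥0∞)⁻¹ ^ 2 := by
        refine tsum_congr fun m => ?_
        rw [ofReal_div_natCast_sq (hnum m) m.succ_ne_zero, ENNReal.ofReal_mul (cc_nonneg _),
          ENNReal.ofReal_natCast]
    _ ≤ ENNReal.ofReal (π ^ 2 / 6) ^ 3 * ENNReal.ofReal (1 + Real.log d1) :=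
        (tsum_ofReal_cc_mul_gcd_le (by omega)).trans
          (by gcongr; exact invDivisorSum_le_one_add_log d1)
    _ = ENNReal.ofReal ((π ^ 2 / 6) ^ 3 * (1 + Real.log d1)) := by
        rw [ENNReal.ofReal_mul (by positivity), ENNReal.ofReal_pow (by positivity)]
end
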